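/- arXiv:1806.01931 — 6 statements merged into one kernel-verified Lean document; each statement's English description precedes it below -/
import Mathlib

section
/- Let x_u ∈ ℝ^{N_u} and x_v ∈ ℝ^{N_v} be grid vectors with all entries in [α,β] and with pairwise distinct entries, and let H_u ∈ ℝ^{N_u×N_u} and H_v ∈ ℝ^{N_v×N_v} be symmetric positive definite matrices that are quadratures of order q on [α,β] with respect to x_u and x_v, respectively. Let q_{u2v} and q_{v2u} be integers with 1 ≤ q_{u2v} ≤ N_u, 1 ≤ q_{v2u} ≤ N_v and q_{u2v} + q_{v2u} ≤ q + 1. Then there exists a matrix I_{u2v} ∈ ℝ^{N_v×N_u} such that I_{u2v} x_u^k = x_v^k for all 0 ≤ k ≤ q_{u2v}−1 and such that its Hilbert adjoint I_{v2u} = H_u^{-1} I_{u2v}ᵀ H_v satisfies I_{v2u} x_v^k = x_u^k for all 0 ≤ k ≤ q_{v2u}−1. -/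
/-!
Write `V x m` for the matrix with columns `x^0, …, x^{m-1}` and put `A = V x_u q_{u2v}`,
`B = V x_v q_{u2v}`, `C = H_v V x_v q_{v2u}`, `D = H_u V x_u q_{v2u}`. The two accuracy conditions
read `I A = B` and `Iᵀ C = D`. Since the grids have distinct points, `A` and `C` have left
inverses `L` and `M`, and `I = B L + Mᵀ (Dᵀ - Cᵀ B L)` solves both equations as soon as
`Dᵀ A = Cᵀ B`. The entries of this compatibility condition are `(x^k)ᵀ H x^l` with
`k + l ≤ q_{u2v} + q_{v2u} - 2 < q`, so it is exactly the exactness of the two quadratures.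
-/

open Matrix

/-- The entrywise power vector `(x_1^j, …, x_N^j)ᵀ`. -/
def pvec {N : ℕ} (x : Fin N → ℝ) (j : ℕ) : Fin N → ℝ := fun i => x i ^ j

namespace Matrix

theorem exists_mul_eq_one_of_mulVec_injective {K : Type*} [Field K] {m n : Type*} [Fintype m]
    [Fintype n] [DecidableEq m] {A : Matrix n m K} (hA : Function.Injective A.mulVec) :
    ∃ L : Matrix m n K, L * A = 1 := by
  classical
  obtain ⟨g, hg⟩ := (mulVecLin A).exists_leftInverse_of_injective (LinearMap.ker_eq_bot.mpr hA)
  refine ⟨LinearMap.toMatrix' g, ?_⟩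
  simpa [LinearMap.toMatrix'_comp, ← toLin'_apply'] using congrArg LinearMap.toMatrix' hg

theorem exists_mul_eq_and_transpose_mul_eq {R : Type*} [CommRing R] {m n p r : Type*}
    [Fintype m] [Fintype n] [Fintype p] [Fintype r] [DecidableEq m] [DecidableEq r]
    {A : Matrix n m R} {B : Matrix p m R} {C : Matrix p r R} {D : Matrix n r R}
    {L : Matrix m n R} {M : Matrix r p R} (hL : L * A = 1) (hM : M * C = 1)
    (hDA : Dᵀ * A = Cᵀ * B) : ∃ X : Matrix p n R, X * A = B ∧ Xᵀ * C = D := by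
  refine ⟨B * L + Mᵀ * (Dᵀ - Cᵀ * B * L), ?_, ?_⟩
  · rw [Matrix.add_mul, Matrix.mul_assoc, Matrix.mul_assoc, Matrix.sub_mul, hDA,
      Matrix.mul_assoc, Matrix.mul_assoc, hL]
    simp
  · apply transpose_injective
    rw [transpose_mul, transpose_transpose, Matrix.mul_add, ← Matrix.mul_assoc Cᵀ Mᵀ,
      ← transpose_mul, hM, transpose_one, Matrix.one_mul, Matrix.mul_assoc]
    abel

@[simp]
theorem rectVandermonde_one_apply {R α : Type*} [CommRing R] (v : α → R) (n : ℕ) (i : α)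
    (j : Fin n) :
    rectVandermonde v 1 n i j = v i ^ (j : ℕ) := by
  simp [rectVandermonde_apply]

theorem mulVec_rectVandermonde_injective {R : Type*} [CommRing R] [IsDomain R] {N m : ℕ}
    {v : Fin N → R} (hv : Function.Injective v) (hm : m ≤ N) :
    Function.Injective (rectVandermonde v 1 m).mulVec := by
  intro a b hab
  rw [← sub_eq_zero]
  refine eq_zero_of_forall_index_sum_pow_mul_eq_zero (f := v ∘ Fin.castLE hm)
    (hv.comp (Fin.castLE_injective hm)) fun j => ?_
  simpa [mulVec, dotProduct, mul_sub, sub_eq_zero] using congrFun hab (Fin.castLE hm j)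

end Matrix

theorem transpose_mul_rectVandermonde_apply {N m r : ℕ} (H : Matrix (Fin N) (Fin N) ℝ)
    (x : Fin N → ℝ) (l : Fin r) (k : Fin m) :
    ((H * rectVandermonde x 1 r)ᵀ * rectVandermonde x 1 m) l k =
      pvec x k ⬝ᵥ H *ᵥ pvec x l := by
  simp only [transpose_apply, mul_apply, rectVandermonde_one_apply, dotProduct, mulVec, pvec,
    Finset.sum_mul, Finset.mul_sum]
  exact Finset.sum_congr rfl fun i _ => Finset.sum_congr rfl fun j _ => by ring

theorem mulVec_pvec_of_mul_rectVandermonde_eq {N N' m : ℕ} {x : Fin N → ℝ} {y : Fin N' → ℝ}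
    {M : Matrix (Fin N') (Fin N) ℝ} (h : M * rectVandermonde x 1 m = rectVandermonde y 1 m) :
    ∀ k < m, M *ᵥ pvec x k = pvec y k := by
  intro k hk
  ext i
  simpa [mul_apply, mulVec, dotProduct, pvec] using congrFun (congrFun h i) ⟨k, hk⟩

theorem stmt1_general {Nu Nv : ℕ} {α β : ℝ}
    (xu : Fin Nu → ℝ) (xv : Fin Nv → ℝ)
    (hxu' : Function.Injective xu) (hxv' : Function.Injective xv)
    (Hu : Matrix (Fin Nu) (Fin Nu) ℝ) (Hv : Matrix (Fin Nv) (Fin Nv) ℝ)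
    (hHu : Hu.PosDef) (hHv : Hv.PosDef)
    (q : ℕ)
    (hQu : ∀ i j : ℕ, i + j < q →
      pvec xu i ⬝ᵥ Hu *ᵥ pvec xu j = (β ^ (i + j + 1) - α ^ (i + j + 1)) / (i + j + 1))
    (hQv : ∀ i j : ℕ, i + j < q →
      pvec xv i ⬝ᵥ Hv *ᵥ pvec xv j = (β ^ (i + j + 1) - α ^ (i + j + 1)) / (i + j + 1))
    (quv qvu : ℕ)
    (hquvN : quv ≤ Nu) (hqvuN : qvu ≤ Nv)
    (hsum : quv + qvu ≤ q + 1) :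
    ∃ Iuv : Matrix (Fin Nv) (Fin Nu) ℝ,
      (∀ k : ℕ, k < quv → Iuv *ᵥ pvec xu k = pvec xv k) ∧
      (∀ k : ℕ, k < qvu → (Hu⁻¹ * Iuvᵀ * Hv) *ᵥ pvec xv k = pvec xu k) := by
  have hHu_det : IsUnit Hu.det := (isUnit_iff_isUnit_det Hu).mp hHu.isUnit
  have hHv_det : IsUnit Hv.det := (isUnit_iff_isUnit_det Hv).mp hHv.isUnit
  obtain ⟨L, hL⟩ :=
    exists_mul_eq_one_of_mulVec_injective (mulVec_rectVandermonde_injective hxu' hquvN)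
  obtain ⟨M, hM⟩ :=
    exists_mul_eq_one_of_mulVec_injective (mulVec_rectVandermonde_injective hxv' hqvuN)
  have hMC : M * Hv⁻¹ * (Hv * rectVandermonde xv 1 qvu) = 1 := by
    rw [Matrix.mul_assoc, nonsing_inv_mul_cancel_left _ _ hHv_det, hM]
  have hcompat : (Hu * rectVandermonde xu 1 qvu)ᵀ * rectVandermonde xu 1 quv =
      (Hv * rectVandermonde xv 1 qvu)ᵀ * rectVandermonde xv 1 quv := by
    ext l k
    have hlk : (k : ℕ) + l < q := by omega
    rw [transpose_mul_rectVandermonde_apply, transpose_mul_rectVandermonde_apply, hQu _ _ hlk,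
      hQv _ _ hlk]
  obtain ⟨I, hIA, hIC⟩ := exists_mul_eq_and_transpose_mul_eq hL hMC hcompat
  refine ⟨I, mulVec_pvec_of_mul_rectVandermonde_eq hIA,
    mulVec_pvec_of_mul_rectVandermonde_eq ?_⟩
  simp only [Matrix.mul_assoc]
  rw [hIC, nonsing_inv_mul_cancel_left _ _ hHu_det]

/-- Theorem 3.2 (existence): given quadratures `H_u`, `H_v` of order `q` on `[α,β]` with
respect to grids with distinct points, and integers `1 ≤ q_{u2v} ≤ N_u`, `1 ≤ q_{v2u} ≤ N_v`
satisfying `q_{u2v} + q_{v2u} ≤ q + 1`, there is an interpolation operator `I_{u2v}` of order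
`q_{u2v}` whose Hilbert adjoint `I_{v2u} = H_u⁻¹ I_{u2v}ᵀ H_v` has order `q_{v2u}`. -/
theorem stmt1 {Nu Nv : ℕ} {α β : ℝ} (hαβ : α < β)
    (xu : Fin Nu → ℝ) (xv : Fin Nv → ℝ)
    (hxu : ∀ i, xu i ∈ Set.Icc α β) (hxv : ∀ i, xv i ∈ Set.Icc α β)
    (hxu' : Function.Injective xu) (hxv' : Function.Injective xv)
    (Hu : Matrix (Fin Nu) (Fin Nu) ℝ) (Hv : Matrix (Fin Nv) (Fin Nv) ℝ)
    (hHu : Hu.PosDef) (hHv : Hv.PosDef)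
    (q : ℕ)
    (hQu : ∀ i j : ℕ, i + j < q →
      pvec xu i ⬝ᵥ Hu *ᵥ pvec xu j = (β ^ (i + j + 1) - α ^ (i + j + 1)) / (i + j + 1))
    (hQv : ∀ i j : ℕ, i + j < q →
      pvec xv i ⬝ᵥ Hv *ᵥ pvec xv j = (β ^ (i + j + 1) - α ^ (i + j + 1)) / (i + j + 1))
    (quv qvu : ℕ)
    (hquv : 1 ≤ quv) (hquvN : quv ≤ Nu)
    (hqvu : 1 ≤ qvu) (hqvuN : qvu ≤ Nv)
    (hsum : quv + qvu ≤ q + 1) :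
    ∃ Iuv : Matrix (Fin Nv) (Fin Nu) ℝ,
      (∀ k : ℕ, k < quv → Iuv *ᵥ pvec xu k = pvec xv k) ∧
      (∀ k : ℕ, k < qvu → (Hu⁻¹ * Iuvᵀ * Hv) *ᵥ pvec xv k = pvec xu k) :=
  stmt1_general xu xv hxu' hxv' Hu Hv hHu hHv q hQu hQv quv qvu hquvN hqvuN hsum
end

section
/- Let x_u ∈ ℝ^{N_u} have pairwise distinct entries and let x_v ∈ ℝ^{N_v}, with all entries of both vectors in [α,β]. Let q_{u2v} = N_u and let q_{v2u} ≥ 1 be an integer, and suppose H_u ∈ ℝ^{N_u×N_u} and H_v ∈ ℝ^{N_v×N_v} are symmetric positive definite quadratures of order q ≥ q_{u2v} + q_{v2u} − 1 on [α,β] with respect to x_u and x_v, respectively. Then: (i) the Vandermonde matrix V_u = X^{0,N_u−1}(x_u) is invertible, (ii) I_{u2v} := X^{0,q_{u2v}−1}(x_v) V_u^{-1} is the unique matrix in ℝ^{N_v×N_u} satisfying I_{u2v} x_u^k = x_v^k for all 0 ≤ k ≤ q_{u2v}−1, and (iii) its Hilbert adjoint I_{v2u} = H_u^{-1} I_{u2v}ᵀ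 H_v satisfies I_{v2u} x_v^k = x_u^k for all 0 ≤ k ≤ q_{v2u}−1. -/
open Matrix

/-- The Vandermonde-like matrix `X^{0,q-1}(x)` with columns `x^0, x^1, …, x^{q-1}`. -/
def vmat {N : ℕ} (x : Fin N → ℝ) (q : ℕ) : Matrix (Fin N) (Fin q) ℝ :=
  fun i j => x i ^ (j : ℕ)

lemma vmat_mulVec_single {N q : ℕ} (x : Fin N → ℝ) (k : Fin q) :
    vmat x q *ᵥ Pi.single k 1 = pvec x (k : ℕ) := by
  funext i
  simp [vmat, pvec, mulVec, dotProduct, Pi.single_apply, mul_ite]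

/-- The case `q_{u2v} = N_u` of the existence theorem: the Vandermonde matrix
`V_u = X^{0,N_u-1}(x_u)` is invertible, `I_{u2v} = X^{0,N_u-1}(x_v) V_u⁻¹` is the unique matrix
interpolating all monomials of degree `< N_u` from `x_u` to `x_v`, and its Hilbert adjoint
`I_{v2u} = H_u⁻¹ I_{u2v}ᵀ H_v` is exact for monomials of degree `< q_{v2u}`. -/
theorem stmt2 {Nu Nv : ℕ} {α β : ℝ} (hαβ : α < β)
    (xu : Fin Nu → ℝ) (xv : Fin Nv → ℝ)
    (hxu : ∀ i, xu i ∈ Set.Icc α β) (hxv : ∀ i, xv i ∈ Set.Icc α β)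
    (hxu' : Function.Injective xu)
    (qvu : ℕ) (hqvu : 1 ≤ qvu)
    (Hu : Matrix (Fin Nu) (Fin Nu) ℝ) (Hv : Matrix (Fin Nv) (Fin Nv) ℝ)
    (hHu : Hu.PosDef) (hHv : Hv.PosDef)
    (q : ℕ) (hq : Nu + qvu - 1 ≤ q)
    (hQu : ∀ i j : ℕ, i + j < q →
      pvec xu i ⬝ᵥ Hu *ᵥ pvec xu j = (β ^ (i + j + 1) - α ^ (i + j + 1)) / (i + j + 1))
    (hQv : ∀ i j : ℕ, i + j < q →
      pvec xv i ⬝ᵥ Hv *ᵥ pvec xv j = (β ^ (i + j + 1) - α ^ (i + j + 1)) / (i + j + 1)) :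
    IsUnit (vmat xu Nu) ∧
    (∀ k : ℕ, k < Nu → (vmat xv Nu * (vmat xu Nu)⁻¹) *ᵥ pvec xu k = pvec xv k) ∧
    (∀ J : Matrix (Fin Nv) (Fin Nu) ℝ,
      (∀ k : ℕ, k < Nu → J *ᵥ pvec xu k = pvec xv k) → J = vmat xv Nu * (vmat xu Nu)⁻¹) ∧
    (∀ k : ℕ, k < qvu →
      (Hu⁻¹ * (vmat xv Nu * (vmat xu Nu)⁻¹)ᵀ * Hv) *ᵥ pvec xv k = pvec xu k) := by
  have hdet : IsUnit (vmat xu Nu).det := by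
    have hv : vmat xu Nu = Matrix.vandermonde xu := rfl
    rw [hv, isUnit_iff_ne_zero, Matrix.det_vandermonde_ne_zero_iff]
    exact hxu'
  have hVu : IsUnit (vmat xu Nu) := (Matrix.isUnit_iff_isUnit_det _).mpr hdet
  have hinterp : ∀ k : ℕ, k < Nu →
      (vmat xv Nu * (vmat xu Nu)⁻¹) *ᵥ pvec xu k = pvec xv k := by
    intro k hk
    have h1 : pvec xu k = vmat xu Nu *ᵥ Pi.single ⟨k, hk⟩ 1 :=
      (vmat_mulVec_single xu ⟨k, hk⟩).symm
    rw [h1, mulVec_mulVec, Matrix.mul_assoc, Matrix.nonsing_inv_mul _ hdet, Matrix.mul_one]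
    exact vmat_mulVec_single xv ⟨k, hk⟩
  refine ⟨hVu, hinterp, ?_, ?_⟩
  · intro J hJ
    have hJV : J * vmat xu Nu = vmat xv Nu := by
      ext i k
      have := congrFun (hJ (k : ℕ) k.isLt) i
      simpa [mul_apply, mulVec, dotProduct, pvec, vmat] using this
    calc J = J * (vmat xu Nu * (vmat xu Nu)⁻¹) := by
            rw [Matrix.mul_nonsing_inv _ hdet, Matrix.mul_one]
      _ = (J * vmat xu Nu) * (vmat xu Nu)⁻¹ := by rw [Matrix.mul_assoc]
      _ = vmat xv Nu * (vmat xu Nu)⁻¹ := by rw [hJV]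
  · intro k hk
    set I := vmat xv Nu * (vmat xu Nu)⁻¹ with hI
    have hHudet : IsUnit Hu.det := isUnit_iff_ne_zero.mpr hHu.det_pos.ne'
    have hkey : Iᵀ *ᵥ (Hv *ᵥ pvec xv k) = Hu *ᵥ pvec xu k := by
      have hdot : ∀ j : Fin Nu,
          pvec xu (j : ℕ) ⬝ᵥ (Iᵀ *ᵥ (Hv *ᵥ pvec xv k)) =
          pvec xu (j : ℕ) ⬝ᵥ (Hu *ᵥ pvec xu k) := by
        intro j
        have hjk : (j : ℕ) + k < q := by
          have := j.isLt; omega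
        rw [dotProduct_mulVec, vecMul_transpose, hinterp (j : ℕ) j.isLt,
          hQv _ _ hjk, hQu _ _ hjk]
      have h2 : (vmat xu Nu)ᵀ *ᵥ (Iᵀ *ᵥ (Hv *ᵥ pvec xv k)) =
          (vmat xu Nu)ᵀ *ᵥ (Hu *ᵥ pvec xu k) := by
        funext j
        have := hdot j
        simpa [mulVec, dotProduct, transpose_apply, pvec, vmat] using this
      have hdetT : IsUnit ((vmat xu Nu)ᵀ).det := by rwa [det_transpose]
      have h3 : ∀ w : Fin Nu → ℝ,
          ((vmat xu Nu)ᵀ)⁻¹ *ᵥ ((vmat xu Nu)ᵀ *ᵥ w) = w := by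
        intro w
        rw [mulVec_mulVec, Matrix.nonsing_inv_mul _ hdetT, one_mulVec]
      calc Iᵀ *ᵥ (Hv *ᵥ pvec xv k)
          = ((vmat xu Nu)ᵀ)⁻¹ *ᵥ ((vmat xu Nu)ᵀ *ᵥ (Iᵀ *ᵥ (Hv *ᵥ pvec xv k))) := (h3 _).symm
        _ = ((vmat xu Nu)ᵀ)⁻¹ *ᵥ ((vmat xu Nu)ᵀ *ᵥ (Hu *ᵥ pvec xu k)) := by rw [h2]
        _ = Hu *ᵥ pvec xu k := h3 _
    rw [Matrix.mul_assoc, ← mulVec_mulVec, ← mulVec_mulVec, hkey, mulVec_mulVec,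
      Matrix.nonsing_inv_mul _ hHudet, one_mulVec]
end

section
/- Let H ∈ ℝ^{N×N} be symmetric positive definite, let D̃ ∈ ℝ^{N×N}, and let e_ℓ, e_r, d_ℓ, d_r ∈ ℝ^N. Define the summation-by-parts operator D₂ = H^{-1}(−D̃ᵀ H D̃ + e_r d_rᵀ − e_ℓ d_ℓᵀ). Define the two-dimensional operators D_Δ = D₂ ⊗ I + I ⊗ D₂ and H_Ω = H ⊗ H (I the N×N identity, ⊗ the Kronecker product), the boundary restriction matrices e_W = e_ℓ ⊗ I, e_E = e_r ⊗ I, e_S = I ⊗ e_ℓ, e_N = I ⊗ e_r, and the boundary normal-derivative matrices d_W = −d_ℓ ⊗ I, d_E = d_r ⊗ I, d_S = −I ⊗ d_ℓ, d_N = I ⊗ d_r. Then for all f, g ∈ ℂ^{N²}, f* H_Ω (D_Δ g) = −(D̃⊗I f)* H_Ω (D̃⊗I g) − (I⊗D̃ f)* H_Ω (I⊗D̃ g) + Σ_{α ∈ {W,S,E,N}} (e_αᵀ f)* H (d_αᵀ g). -/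
/-!
Multiplying the definition of `D₂` by `H` gives `H D₂ = -D̃ᵀ H D̃ + e_r d_rᵀ - e_ℓ d_ℓᵀ`, and the
mixed-product rule gives `H_Ω D_Δ = (H D₂) ⊗ H + H ⊗ (H D₂)`. Expanding, the volume parts are
`(D̃ᵀ H D̃) ⊗ H = (D̃ ⊗ I)ᵀ H_Ω (D̃ ⊗ I)` and its mirror image, and the boundary parts are
`(e d ᵀ) ⊗ H = (e ⊗ I) H (d ⊗ I)ᵀ` and its mirror image. Sandwiching this identity of real
matrices between `f*` and `g` gives the claim.
-/

open Matrix Kronecker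

/-- Complexification of a real matrix. -/
def cm {m n : Type*} (A : Matrix m n ℝ) : Matrix m n ℂ := A.map (fun r => (r : ℂ))

/-- The Kronecker product `v ⊗ I` of a column vector `v ∈ ℝ^N` with the `N×N` identity,
an `N² × N` matrix. -/
def kronL {N : ℕ} (v : Fin N → ℝ) : Matrix (Fin N × Fin N) (Fin N) ℝ :=
  fun p k => v p.1 * (if p.2 = k then 1 else 0)

/-- The Kronecker product `I ⊗ v` of the `N×N` identity with a column vector `v ∈ ℝ^N`,
an `N² × N` matrix. -/
def kronR {N : ℕ} (v : Fin N → ℝ) : Matrix (Fin N × Fin N) (Fin N) ℝ :=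
  fun p k => (if p.1 = k then 1 else 0) * v p.2

section Complexification

variable {m n p : Type*}

lemma cm_mul [Fintype n] (A : Matrix m n ℝ) (B : Matrix n p ℝ) : cm (A * B) = cm A * cm B :=
  Matrix.map_mul (f := Complex.ofRealHom)

lemma cm_add (A B : Matrix m n ℝ) : cm (A + B) = cm A + cm B :=
  Matrix.map_add _ Complex.ofReal_add A B

lemma cm_sub (A B : Matrix m n ℝ) : cm (A - B) = cm A - cm B :=
  Matrix.map_sub _ Complex.ofReal_sub A B

lemma cm_neg (A : Matrix m n ℝ) : cm (-A) = -cm A :=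
  Matrix.map_neg _ Complex.ofReal_neg A

lemma cm_transpose (A : Matrix m n ℝ) : cm Aᵀ = (cm A)ᵀ := rfl

lemma conjTranspose_cm (A : Matrix m n ℝ) : (cm A)ᴴ = cm Aᵀ := by
  rw [← conjTranspose_eq_transpose_of_trivial]
  exact (conjTranspose_map _ fun r => (Complex.conj_ofReal r).symm).symm

variable [Fintype m] [Fintype n]

lemma star_cm_mulVec_dotProduct_cm_mulVec (A B : Matrix m n ℝ) (M : Matrix m m ℝ) (f g : n → ℂ) :
    star (cm A *ᵥ f) ⬝ᵥ cm M *ᵥ (cm B *ᵥ g) = star f ⬝ᵥ cm (Aᵀ * M * B) *ᵥ g := by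
  rw [star_mulVec, conjTranspose_cm, ← dotProduct_mulVec, mulVec_mulVec, mulVec_mulVec,
    ← cm_mul, ← cm_mul, Matrix.mul_assoc]

lemma star_cm_transpose_mulVec_dotProduct_cm_mulVec (A B : Matrix m n ℝ) (M : Matrix n n ℝ)
    (f g : m → ℂ) :
    star ((cm A)ᵀ *ᵥ f) ⬝ᵥ cm M *ᵥ ((cm B)ᵀ *ᵥ g) = star f ⬝ᵥ cm (A * M * Bᵀ) *ᵥ g := by
  rw [← cm_transpose, ← cm_transpose, star_cm_mulVec_dotProduct_cm_mulVec, transpose_transpose]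

end Complexification

section KroneckerSquare

variable {R ι : Type*} [CommSemiring R] [Fintype ι] [DecidableEq ι] (H Dt D2 : Matrix ι ι R)

lemma kronecker_mul_kronecker_one : (H ⊗ₖ H) * (D2 ⊗ₖ 1) = (H * D2) ⊗ₖ H := by
  rw [← mul_kronecker_mul, Matrix.mul_one]

lemma kronecker_mul_one_kronecker : (H ⊗ₖ H) * (1 ⊗ₖ D2) = H ⊗ₖ (H * D2) := by
  rw [← mul_kronecker_mul, Matrix.mul_one]

lemma transpose_kronecker_one_mul_mul :
    (Dt ⊗ₖ 1)ᵀ * (H ⊗ₖ H) * (Dt ⊗ₖ 1) = (Dtᵀ * H * Dt) ⊗ₖ H := by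
  rw [← kroneckerMap_transpose, transpose_one, ← mul_kronecker_mul, ← mul_kronecker_mul,
    Matrix.one_mul, Matrix.mul_one]

lemma transpose_one_kronecker_mul_mul :
    (1 ⊗ₖ Dt)ᵀ * (H ⊗ₖ H) * (1 ⊗ₖ Dt) = H ⊗ₖ (Dtᵀ * H * Dt) := by
  rw [← kroneckerMap_transpose, transpose_one, ← mul_kronecker_mul, ← mul_kronecker_mul,
    Matrix.one_mul, Matrix.mul_one]

end KroneckerSquare

section Kronecker

variable {N : ℕ}

lemma kronL_mul_mul_transpose_kronL (v w : Fin N → ℝ) (H : Matrix (Fin N) (Fin N) ℝ) :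
    kronL v * H * (kronL w)ᵀ = vecMulVec v w ⊗ₖ H := by
  ext p q
  simp [Matrix.mul_apply, kronL, vecMulVec_apply, ite_mul, mul_ite]
  ring

lemma kronR_mul_mul_transpose_kronR (v w : Fin N → ℝ) (H : Matrix (Fin N) (Fin N) ℝ) :
    kronR v * H * (kronR w)ᵀ = H ⊗ₖ vecMulVec v w := by
  ext p q
  simp [Matrix.mul_apply, kronR, vecMulVec_apply, ite_mul, mul_ite]
  ring

variable (H Dt D2 : Matrix (Fin N) (Fin N) ℝ)

lemma kronecker_mul_laplacian_eq (el er dl dr : Fin N → ℝ)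
    (hHD2 : H * D2 = -(Dtᵀ * H * Dt) + vecMulVec er dr - vecMulVec el dl) :
    (H ⊗ₖ H) * (D2 ⊗ₖ 1 + 1 ⊗ₖ D2) =
      -((Dt ⊗ₖ 1)ᵀ * (H ⊗ₖ H) * (Dt ⊗ₖ 1)) - ((1 ⊗ₖ Dt)ᵀ * (H ⊗ₖ H) * (1 ⊗ₖ Dt))
        + kronL el * H * (kronL (-dl))ᵀ + kronR el * H * (kronR (-dl))ᵀ
        + kronL er * H * (kronL dr)ᵀ + kronR er * H * (kronR dr)ᵀ := by
  rw [Matrix.mul_add, kronecker_mul_kronecker_one, kronecker_mul_one_kronecker, hHD2,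
    transpose_kronecker_one_mul_mul, transpose_one_kronecker_mul_mul,
    kronL_mul_mul_transpose_kronL, kronL_mul_mul_transpose_kronL,
    kronR_mul_mul_transpose_kronR, kronR_mul_mul_transpose_kronR]
  ext p q
  simp [vecMulVec_apply]
  ring

end Kronecker

theorem stmt5_general {N : ℕ}
    (H : Matrix (Fin N) (Fin N) ℝ) (hH : H.PosDef)
    (Dt : Matrix (Fin N) (Fin N) ℝ)
    (el er dl dr : Fin N → ℝ)
    (D2 : Matrix (Fin N) (Fin N) ℝ)
    (hD2 : D2 = H⁻¹ * (-(Dtᵀ * H * Dt) + vecMulVec er dr - vecMulVec el dl))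
    (DΔ HΩ : Matrix (Fin N × Fin N) (Fin N × Fin N) ℝ)
    (hDΔ : DΔ = D2 ⊗ₖ (1 : Matrix (Fin N) (Fin N) ℝ) + (1 : Matrix (Fin N) (Fin N) ℝ) ⊗ₖ D2)
    (hHΩ : HΩ = H ⊗ₖ H)
    (eW eE eS eN dW dE dS dN : Matrix (Fin N × Fin N) (Fin N) ℝ)
    (heW : eW = kronL el) (heE : eE = kronL er) (heS : eS = kronR el) (heN : eN = kronR er)
    (hdW : dW = kronL (-dl)) (hdE : dE = kronL dr) (hdS : dS = kronR (-dl)) (hdN : dN = kronR dr) :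
    ∀ f g : Fin N × Fin N → ℂ,
      star f ⬝ᵥ (cm HΩ) *ᵥ ((cm DΔ) *ᵥ g) =
        -(star ((cm (Dt ⊗ₖ (1 : Matrix (Fin N) (Fin N) ℝ))) *ᵥ f) ⬝ᵥ
            (cm HΩ) *ᵥ ((cm (Dt ⊗ₖ (1 : Matrix (Fin N) (Fin N) ℝ))) *ᵥ g))
        - (star ((cm ((1 : Matrix (Fin N) (Fin N) ℝ) ⊗ₖ Dt)) *ᵥ f) ⬝ᵥ
            (cm HΩ) *ᵥ ((cm ((1 : Matrix (Fin N) (Fin N) ℝ) ⊗ₖ Dt)) *ᵥ g))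
        + (star ((cm eW)ᵀ *ᵥ f) ⬝ᵥ (cm H) *ᵥ ((cm dW)ᵀ *ᵥ g))
        + (star ((cm eS)ᵀ *ᵥ f) ⬝ᵥ (cm H) *ᵥ ((cm dS)ᵀ *ᵥ g))
        + (star ((cm eE)ᵀ *ᵥ f) ⬝ᵥ (cm H) *ᵥ ((cm dE)ᵀ *ᵥ g))
        + (star ((cm eN)ᵀ *ᵥ f) ⬝ᵥ (cm H) *ᵥ ((cm dN)ᵀ *ᵥ g)) := by
  intro f g
  subst hDΔ hHΩ heW heE heS heN hdW hdE hdS hdN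
  have hHD2 : H * D2 = -(Dtᵀ * H * Dt) + vecMulVec er dr - vecMulVec el dl := by
    rw [hD2, mul_nonsing_inv_cancel_left _ _ (isUnit_iff_ne_zero.mpr hH.det_pos.ne')]
  rw [mulVec_mulVec, ← cm_mul, kronecker_mul_laplacian_eq H Dt D2 el er dl dr hHD2]
  simp only [star_cm_mulVec_dotProduct_cm_mulVec, star_cm_transpose_mulVec_dotProduct_cm_mulVec,
    cm_add, cm_sub, cm_neg, add_mulVec, sub_mulVec, neg_mulVec, dotProduct_add, dotProduct_sub,
    dotProduct_neg]

/-- The discrete analogue of Green's first identity for the two-dimensional SBP operator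
`D_Δ = D₂ ⊗ I + I ⊗ D₂` built from `D₂ = H⁻¹(−D̃ᵀ H D̃ + e_r d_rᵀ − e_ℓ d_ℓᵀ)`:
`f* H_Ω D_Δ g = −(D̃⊗I f)* H_Ω (D̃⊗I g) − (I⊗D̃ f)* H_Ω (I⊗D̃ g)
  + Σ_{α∈{W,S,E,N}} (e_αᵀ f)* H (d_αᵀ g)`,
where `e_W = e_ℓ ⊗ I`, `e_E = e_r ⊗ I`, `e_S = I ⊗ e_ℓ`, `e_N = I ⊗ e_r`,
`d_W = −d_ℓ ⊗ I`, `d_E = d_r ⊗ I`, `d_S = −I ⊗ d_ℓ`, `d_N = I ⊗ d_r`. -/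
theorem stmt5 {N : ℕ}
    (H : Matrix (Fin N) (Fin N) ℝ) (hH : H.PosDef) (hHsymm : H.IsSymm)
    (Dt : Matrix (Fin N) (Fin N) ℝ)
    (el er dl dr : Fin N → ℝ)
    (D2 : Matrix (Fin N) (Fin N) ℝ)
    (hD2 : D2 = H⁻¹ * (-(Dtᵀ * H * Dt) + vecMulVec er dr - vecMulVec el dl))
    (DΔ HΩ : Matrix (Fin N × Fin N) (Fin N × Fin N) ℝ)
    (hDΔ : DΔ = D2 ⊗ₖ (1 : Matrix (Fin N) (Fin N) ℝ) + (1 : Matrix (Fin N) (Fin N) ℝ) ⊗ₖ D2)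
    (hHΩ : HΩ = H ⊗ₖ H)
    (eW eE eS eN dW dE dS dN : Matrix (Fin N × Fin N) (Fin N) ℝ)
    (heW : eW = kronL el) (heE : eE = kronL er) (heS : eS = kronR el) (heN : eN = kronR er)
    (hdW : dW = kronL (-dl)) (hdE : dE = kronL dr) (hdS : dS = kronR (-dl)) (hdN : dN = kronR dr) :
    ∀ f g : Fin N × Fin N → ℂ,
      star f ⬝ᵥ (cm HΩ) *ᵥ ((cm DΔ) *ᵥ g) =
        -(star ((cm (Dt ⊗ₖ (1 : Matrix (Fin N) (Fin N) ℝ))) *ᵥ f) ⬝ᵥ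
            (cm HΩ) *ᵥ ((cm (Dt ⊗ₖ (1 : Matrix (Fin N) (Fin N) ℝ))) *ᵥ g))
        - (star ((cm ((1 : Matrix (Fin N) (Fin N) ℝ) ⊗ₖ Dt)) *ᵥ f) ⬝ᵥ
            (cm HΩ) *ᵥ ((cm ((1 : Matrix (Fin N) (Fin N) ℝ) ⊗ₖ Dt)) *ᵥ g))
        + (star ((cm eW)ᵀ *ᵥ f) ⬝ᵥ (cm H) *ᵥ ((cm dW)ᵀ *ᵥ g))
        + (star ((cm eS)ᵀ *ᵥ f) ⬝ᵥ (cm H) *ᵥ ((cm dS)ᵀ *ᵥ g))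
        + (star ((cm eE)ᵀ *ᵥ f) ⬝ᵥ (cm H) *ᵥ ((cm dE)ᵀ *ᵥ g))
        + (star ((cm eN)ᵀ *ᵥ f) ⬝ᵥ (cm H) *ᵥ ((cm dN)ᵀ *ᵥ g)) :=
  stmt5_general H hH Dt el er dl dr D2 hD2 DΔ HΩ hDΔ hHΩ eW eE eS eN dW dE dS dN heW heE heS heN hdW
    hdE hdS hdN
end

section
/- Let H_U ∈ ℝ^{n_U×n_U}, H_V ∈ ℝ^{n_V×n_V}, H_U^Γ ∈ ℝ^{m_U×m_U}, H_V^Γ ∈ ℝ^{m_V×m_V} be symmetric positive definite. Let e_E, d_E ∈ ℝ^{n_U×m_U}, e_W, d_W ∈ ℝ^{n_V×m_V}, and suppose there exist symmetric positive semidefinite M_U, M_V with H_U D_Δ^U = e_E H_U^Γ d_Eᵀ − M_U and H_V D_Δ^V = e_W H_V^Γ d_Wᵀ − M_V. Let the interpolation matrices satisfy H_U^Γ I_{v2u}^b = (I_{u2v}^g)ᵀ H_V^Γ and (I_{v2u}^g)ᵀ H_U^Γ = H_V^Γ I_{u2v}^b. Let c₁², c₂², h_u, h_v > 0 and let the penalty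 parameters satisfy σ_v = τ_u and σ_u = τ_v. Suppose u: ℝ → ℝ^{n_U}, v: ℝ → ℝ^{n_V} are twice differentiable and satisfy u'' = c₁² D_Δ^U u − H_U^{-1}[ (τ_u/h_u) c₁² e_E H_U^Γ (e_Eᵀu − I_{v2u}^g e_Wᵀv) + (σ_u/h_v) c₂² e_E H_U^Γ I_{v2u}^b (I_{u2v}^g e_Eᵀu − e_Wᵀv) ] + H_U^{-1}[ (c₁²/2) d_E H_U^Γ (e_Eᵀu − I_{v2u}^g e_Wᵀv) − (1/2) e_E H_U^Γ (c₁² d_Eᵀu + c₂² I_{v2u}^b d_Wᵀv) ], and v'' = c₂² D_Δ^V v − H_V^{-1}[ (τ_v/h_v) c₂² e_W H_V^Γ (e_Wᵀv − I_{u2v}^g e_Eᵀu) + (σ_v/h_u) c₁² e_W H_V^Γ I_{u2v}^b (I_{v2u}^g e_Wᵀv − e_Eᵀu) ] + H_V^{-1}[ (c₂²/2) d_W H_V^Γ (e_Wᵀv − I_{u2v}^g e_Eᵀu) − (1/2) e_W H_V^Γ (c₂² d_Wᵀv + c₁² I_{u2v}^b d_Eᵀu) ]. Define the discrete energy E(t)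 = (1/2)[ u'ᵀH_U u' + v'ᵀH_V v' + c₁² uᵀM_U u + c₂² vᵀM_V v + c₁² A_u + c₂² A_v ], where A_u = (τ_u/h_u)(e_Eᵀu − I_{v2u}^g e_Wᵀv)ᵀH_U^Γ(e_Eᵀu − I_{v2u}^g e_Wᵀv) − (d_Eᵀu)ᵀH_U^Γ(e_Eᵀu − I_{v2u}^g e_Wᵀv) and A_v = (τ_v/h_v)(e_Wᵀv − I_{u2v}^g e_Eᵀu)ᵀH_V^Γ(e_Wᵀv − I_{u2v}^g e_Eᵀu) − (d_Wᵀv)ᵀH_V^Γ(e_Wᵀv − I_{u2v}^g e_Eᵀu). Then dE/dt = 0 for all t. -/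
/-!
Multiply the equation of each block by `u'ᵀ H_U` (resp. `v'ᵀ H_V`). The summation-by-parts
identity turns `u'ᵀ H_U D_Δ^U u` into the interface term `(e_Eᵀ u')ᵀ H_U^Γ (d_Eᵀ u)` minus
`u'ᵀ M_U u`, which cancels the rate of the `M_U` part of the energy, and the derivative of `A_u`
absorbs the penalty terms acting on the block's own trace. So the energy of one block changes only
by a flux that pairs its interface data with the traces of the other block, the adjoint relations
moving the `I^b` operators to the other side of the interface. With `σ_v = τ_u` and `σ_u = τ_v`
the two fluxes are exact negatives of each other.
-/

open Matrix

section Calculus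

variable {𝕜 : Type*} [NontriviallyNormedField 𝕜] {ι κ : Type*} [Fintype ι]
  {f g : 𝕜 → ι → 𝕜} {f' g' : ι → 𝕜} {t : 𝕜}

theorem HasDerivAt.mulVec (A : Matrix κ ι 𝕜) (hf : HasDerivAt f f' t) :
    HasDerivAt (fun s => A *ᵥ f s) (A *ᵥ f') t :=
  hasDerivAt_pi.2 fun i => HasDerivAt.fun_sum fun j _ => (hasDerivAt_pi.1 hf j).const_mul (A i j)

theorem HasDerivAt.dotProduct (hf : HasDerivAt f f' t) (hg : HasDerivAt g g' t) :
    HasDerivAt (fun s => f s ⬝ᵥ g s) (f' ⬝ᵥ g t + f t ⬝ᵥ g') t := by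
  simp only [_root_.dotProduct, ← Finset.sum_add_distrib]
  exact HasDerivAt.fun_sum fun i _ => (hasDerivAt_pi.1 hf i).mul (hasDerivAt_pi.1 hg i)

theorem Matrix.IsSymm.dotProduct_mulVec_comm {A : Matrix ι ι 𝕜} (hA : A.IsSymm) (x y : ι → 𝕜) :
    x ⬝ᵥ A *ᵥ y = y ⬝ᵥ A *ᵥ x := by
  rw [← dotProduct_transpose_mulVec, hA.eq]

theorem HasDerivAt.dotProduct_mulVec_self {A : Matrix ι ι 𝕜} (hA : A.IsSymm)
    (hf : HasDerivAt f f' t) :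
    HasDerivAt (fun s => f s ⬝ᵥ A *ᵥ f s) (2 * (f t ⬝ᵥ A *ᵥ f')) t := by
  convert hf.dotProduct (hf.mulVec A) using 1
  rw [hA.dotProduct_mulVec_comm]
  ring

end Calculus

section Block

variable {n m m' : Type*} [Fintype n] [DecidableEq n] [Fintype m] [Fintype m']

/-- One block of the semi-discretization; for the `u` block `Ig, Ib, Jg` are
`I_{v2u}^g, I_{v2u}^b, I_{u2v}^g`. The neighbouring block enters only through its interface trace
`w` and its normal derivative `q`. -/
noncomputable def satRhs (H D : Matrix n n ℝ) (HΓ : Matrix m m ℝ) (e d : Matrix n m ℝ)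
    (Ig Ib : Matrix m m' ℝ) (Jg : Matrix m' m ℝ) (c c' τ σ h h' : ℝ)
    (x : n → ℝ) (w q : m' → ℝ) : n → ℝ :=
  c • (D *ᵥ x)
    - H⁻¹ *ᵥ
        ((τ / h * c) • (e *ᵥ (HΓ *ᵥ (eᵀ *ᵥ x - Ig *ᵥ w)))
          + (σ / h' * c') • (e *ᵥ (HΓ *ᵥ (Ib *ᵥ (Jg *ᵥ (eᵀ *ᵥ x) - w)))))
    + H⁻¹ *ᵥ
        ((c / 2) • (d *ᵥ (HΓ *ᵥ (eᵀ *ᵥ x - Ig *ᵥ w)))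
          - ((1 : ℝ) / 2) • (e *ᵥ (HΓ *ᵥ (c • (dᵀ *ᵥ x) + c' • (Ib *ᵥ q)))))

variable {H D M : Matrix n n ℝ} {HΓ : Matrix m m ℝ} {HΓ' : Matrix m' m' ℝ}
  {e d : Matrix n m ℝ} {Ig Ib : Matrix m m' ℝ} {Jg : Matrix m' m ℝ}

theorem dotProduct_mulVec_satRhs (hH : IsUnit H.det) (hM : M.IsSymm) (hHΓ : HΓ.IsSymm)
    (hHΓ' : HΓ'.IsSymm) (hSBP : H * D = e * HΓ * dᵀ - M) (hadj : HΓ * Ib = Jgᵀ * HΓ')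
    (c c' τ σ h h' : ℝ) (x x' : n → ℝ) (w q : m' → ℝ) :
    x' ⬝ᵥ H *ᵥ satRhs H D HΓ e d Ig Ib Jg c c' τ σ h h' x w q =
      -c * (x ⬝ᵥ M *ᵥ x')
        - τ / h * c * ((eᵀ *ᵥ x - Ig *ᵥ w) ⬝ᵥ HΓ *ᵥ (eᵀ *ᵥ x'))
        + σ / h' * c' * ((w - Jg *ᵥ (eᵀ *ᵥ x)) ⬝ᵥ HΓ' *ᵥ (Jg *ᵥ (eᵀ *ᵥ x')))
        + c / 2 * ((dᵀ *ᵥ x') ⬝ᵥ HΓ *ᵥ (eᵀ *ᵥ x - Ig *ᵥ w) + (dᵀ *ᵥ x) ⬝ᵥ HΓ *ᵥ (eᵀ *ᵥ x'))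
        - c' / 2 * (q ⬝ᵥ HΓ' *ᵥ (Jg *ᵥ (eᵀ *ᵥ x'))) := by
  have hinv (g : n → ℝ) : x' ⬝ᵥ H *ᵥ (H⁻¹ *ᵥ g) = x' ⬝ᵥ g := by
    rw [mulVec_mulVec, mul_nonsing_inv _ hH, one_mulVec]
  have htrace_e (y : m → ℝ) : x' ⬝ᵥ e *ᵥ y = (eᵀ *ᵥ x') ⬝ᵥ y := by
    rw [dotProduct_mulVec, mulVec_transpose]
  have htrace_d (y : m → ℝ) : x' ⬝ᵥ d *ᵥ y = (dᵀ *ᵥ x') ⬝ᵥ y := by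
    rw [dotProduct_mulVec, mulVec_transpose]
  have hgreen : x' ⬝ᵥ H *ᵥ (D *ᵥ x) = (eᵀ *ᵥ x') ⬝ᵥ HΓ *ᵥ (dᵀ *ᵥ x) - x ⬝ᵥ M *ᵥ x' := by
    rw [mulVec_mulVec, hSBP, sub_mulVec, dotProduct_sub, ← mulVec_mulVec, ← mulVec_mulVec,
      htrace_e, hM.dotProduct_mulVec_comm]
  have hadj' (y : m' → ℝ) :
      (eᵀ *ᵥ x') ⬝ᵥ HΓ *ᵥ (Ib *ᵥ y) = y ⬝ᵥ HΓ' *ᵥ (Jg *ᵥ (eᵀ *ᵥ x')) := by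
    rw [mulVec_mulVec, hadj, ← mulVec_mulVec, dotProduct_transpose_mulVec, dotProduct_comm,
      hHΓ'.dotProduct_mulVec_comm]
  rw [satRhs]
  simp only [mulVec_add, mulVec_sub, mulVec_smul, dotProduct_add, dotProduct_sub, dotProduct_smul,
    smul_eq_mul, hinv, hgreen, htrace_e, htrace_d, hadj', sub_dotProduct,
    hHΓ.dotProduct_mulVec_comm (eᵀ *ᵥ x')]
  ring

theorem hasDerivAt_blockEnergy (hH : H.IsSymm) (hHdet : IsUnit H.det) (hM : M.IsSymm)
    (hHΓ : HΓ.IsSymm) (hHΓ' : HΓ'.IsSymm) (hSBP : H * D = e * HΓ * dᵀ - M)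
    (hadj : HΓ * Ib = Jgᵀ * HΓ') (c c' τ σ h h' : ℝ) {x x' : ℝ → n → ℝ} {w q : ℝ → m' → ℝ}
    {w' : m' → ℝ} {t : ℝ} (hx : HasDerivAt x (x' t) t)
    (hx' : HasDerivAt x' (satRhs H D HΓ e d Ig Ib Jg c c' τ σ h h' (x t) (w t) (q t)) t)
    (hw : HasDerivAt w w' t) :
    HasDerivAt (fun s => (1 / 2 : ℝ) *
        (x' s ⬝ᵥ H *ᵥ x' s + c * (x s ⬝ᵥ M *ᵥ x s)
          + c * (τ / h * ((eᵀ *ᵥ x s - Ig *ᵥ w s) ⬝ᵥ HΓ *ᵥ (eᵀ *ᵥ x s - Ig *ᵥ w s))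
            - (dᵀ *ᵥ x s) ⬝ᵥ HΓ *ᵥ (eᵀ *ᵥ x s - Ig *ᵥ w s))))
      (((c / 2) • (dᵀ *ᵥ x t) - (τ / h * c) • (eᵀ *ᵥ x t - Ig *ᵥ w t)) ⬝ᵥ HΓ *ᵥ (Ig *ᵥ w')
        + ((σ / h' * c') • (w t - Jg *ᵥ (eᵀ *ᵥ x t)) - (c' / 2) • q t)
          ⬝ᵥ HΓ' *ᵥ (Jg *ᵥ (eᵀ *ᵥ x' t))) t := by
  have hξ : HasDerivAt (fun s => eᵀ *ᵥ x s - Ig *ᵥ w s) (eᵀ *ᵥ x' t - Ig *ᵥ w') t :=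
    (hx.mulVec eᵀ).sub (hw.mulVec Ig)
  have hE := ((((hx'.dotProduct_mulVec_self hH).fun_add
    ((hx.dotProduct_mulVec_self hM).const_mul c)).fun_add
      ((((hξ.dotProduct_mulVec_self hHΓ).const_mul (τ / h)).fun_sub
        ((hx.mulVec dᵀ).dotProduct (hξ.mulVec HΓ))).const_mul c))).const_mul (1 / 2 : ℝ)
  refine hE.congr_deriv ?_
  rw [dotProduct_mulVec_satRhs hHdet hM hHΓ hHΓ' hSBP hadj]
  simp only [mulVec_sub, dotProduct_sub, sub_dotProduct, smul_dotProduct, smul_eq_mul]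
  ring

end Block

theorem stmt8_general {nU nV mU mV : ℕ}
    (HU : Matrix (Fin nU) (Fin nU) ℝ) (HV : Matrix (Fin nV) (Fin nV) ℝ)
    (HUΓ : Matrix (Fin mU) (Fin mU) ℝ) (HVΓ : Matrix (Fin mV) (Fin mV) ℝ)
    (hHU : HU.PosDef) (hHV : HV.PosDef) (hHUΓ : HUΓ.PosDef) (hHVΓ : HVΓ.PosDef)
    (eE dE : Matrix (Fin nU) (Fin mU) ℝ) (eW dW : Matrix (Fin nV) (Fin mV) ℝ)
    (DΔU : Matrix (Fin nU) (Fin nU) ℝ) (DΔV : Matrix (Fin nV) (Fin nV) ℝ)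
    (MU : Matrix (Fin nU) (Fin nU) ℝ) (MV : Matrix (Fin nV) (Fin nV) ℝ)
    (hMU : MU.PosSemidef) (hMV : MV.PosSemidef)
    (hSBPU : HU * DΔU = eE * HUΓ * dEᵀ - MU)
    (hSBPV : HV * DΔV = eW * HVΓ * dWᵀ - MV)
    (Ivug Ivub : Matrix (Fin mU) (Fin mV) ℝ) (Iuvg Iuvb : Matrix (Fin mV) (Fin mU) ℝ)
    (hadj1 : HUΓ * Ivub = Iuvgᵀ * HVΓ)
    (hadj2 : Ivugᵀ * HUΓ = HVΓ * Iuvb)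
    (c1sq c2sq hu hv : ℝ)
    (τu τv σu σv : ℝ) (hσv : σv = τu) (hσu : σu = τv)
    (u u' : ℝ → Fin nU → ℝ) (v v' : ℝ → Fin nV → ℝ)
    (hu' : ∀ t : ℝ, HasDerivAt u (u' t) t)
    (hv' : ∀ t : ℝ, HasDerivAt v (v' t) t)
    (hu'' : ∀ t : ℝ, HasDerivAt u'
      (c1sq • (DΔU *ᵥ u t)
        - HU⁻¹ *ᵥ
            ((τu / hu * c1sq) • (eE *ᵥ (HUΓ *ᵥ (eEᵀ *ᵥ u t - Ivug *ᵥ (eWᵀ *ᵥ v t))))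
              + (σu / hv * c2sq) •
                  (eE *ᵥ (HUΓ *ᵥ (Ivub *ᵥ (Iuvg *ᵥ (eEᵀ *ᵥ u t) - eWᵀ *ᵥ v t)))))
        + HU⁻¹ *ᵥ
            ((c1sq / 2) • (dE *ᵥ (HUΓ *ᵥ (eEᵀ *ᵥ u t - Ivug *ᵥ (eWᵀ *ᵥ v t))))
              - ((1 : ℝ) / 2) •
                  (eE *ᵥ (HUΓ *ᵥ (c1sq • (dEᵀ *ᵥ u t) + c2sq • (Ivub *ᵥ (dWᵀ *ᵥ v t))))))) t)
    (hv'' : ∀ t : ℝ, HasDerivAt v'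
      (c2sq • (DΔV *ᵥ v t)
        - HV⁻¹ *ᵥ
            ((τv / hv * c2sq) • (eW *ᵥ (HVΓ *ᵥ (eWᵀ *ᵥ v t - Iuvg *ᵥ (eEᵀ *ᵥ u t))))
              + (σv / hu * c1sq) •
                  (eW *ᵥ (HVΓ *ᵥ (Iuvb *ᵥ (Ivug *ᵥ (eWᵀ *ᵥ v t) - eEᵀ *ᵥ u t)))))
        + HV⁻¹ *ᵥ
            ((c2sq / 2) • (dW *ᵥ (HVΓ *ᵥ (eWᵀ *ᵥ v t - Iuvg *ᵥ (eEᵀ *ᵥ u t))))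
              - ((1 : ℝ) / 2) •
                  (eW *ᵥ (HVΓ *ᵥ (c2sq • (dWᵀ *ᵥ v t) + c1sq • (Iuvb *ᵥ (dEᵀ *ᵥ u t))))))) t) :
    ∀ t : ℝ,
      HasDerivAt (fun s =>
        (1 / 2 : ℝ) *
          (u' s ⬝ᵥ HU *ᵥ u' s + v' s ⬝ᵥ HV *ᵥ v' s
            + c1sq * (u s ⬝ᵥ MU *ᵥ u s) + c2sq * (v s ⬝ᵥ MV *ᵥ v s)
            + c1sq *
                ((τu / hu) *
                    ((eEᵀ *ᵥ u s - Ivug *ᵥ (eWᵀ *ᵥ v s)) ⬝ᵥ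
                      HUΓ *ᵥ (eEᵀ *ᵥ u s - Ivug *ᵥ (eWᵀ *ᵥ v s)))
                  - (dEᵀ *ᵥ u s) ⬝ᵥ HUΓ *ᵥ (eEᵀ *ᵥ u s - Ivug *ᵥ (eWᵀ *ᵥ v s)))
            + c2sq *
                ((τv / hv) *
                    ((eWᵀ *ᵥ v s - Iuvg *ᵥ (eEᵀ *ᵥ u s)) ⬝ᵥ
                      HVΓ *ᵥ (eWᵀ *ᵥ v s - Iuvg *ᵥ (eEᵀ *ᵥ u s)))
                  - (dWᵀ *ᵥ v s) ⬝ᵥ HVΓ *ᵥ (eWᵀ *ᵥ v s - Iuvg *ᵥ (eEᵀ *ᵥ u s)))))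
        0 t := by
  intro t
  have hsymm {k : Type} [Fintype k] {A : Matrix k k ℝ} (hA : A.IsHermitian) : A.IsSymm :=
    isHermitian_iff_isSymm.mp hA
  have hEU := hasDerivAt_blockEnergy (hsymm hHU.isHermitian) hHU.det_pos.ne'.isUnit
    (hsymm hMU.isHermitian) (hsymm hHUΓ.isHermitian) (hsymm hHVΓ.isHermitian) hSBPU hadj1
    c1sq c2sq τu σu hu hv (Ig := Ivug) (w := fun s => eWᵀ *ᵥ v s) (q := fun s => dWᵀ *ᵥ v s)
    (hu' t) (hu'' t) ((hv' t).mulVec eWᵀ)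
  have hEV := hasDerivAt_blockEnergy (hsymm hHV.isHermitian) hHV.det_pos.ne'.isUnit
    (hsymm hMV.isHermitian) (hsymm hHVΓ.isHermitian) (hsymm hHUΓ.isHermitian) hSBPV hadj2.symm
    c2sq c1sq τv σv hv hu (Ig := Iuvg) (w := fun s => eEᵀ *ᵥ u s) (q := fun s => dEᵀ *ᵥ u s)
    (hv' t) (hv'' t) ((hu' t).mulVec eEᵀ)
  refine ((hEU.fun_add hEV).congr_deriv ?_).congr_of_eventuallyEq (.of_forall fun s => ?_)
  · subst hσv hσu
    simp only [sub_dotProduct, smul_dotProduct, smul_eq_mul]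
    ring
  · ring

/-- Energy conservation for the SBP-SAT semi-discretization of the second order wave equation
`u_tt = c₁²Δu`, `v_tt = c₂²Δv` coupled at a non-conforming interface with order preserving
interpolation operators and penalty parameters satisfying `σ_v = τ_u`, `σ_u = τ_v`:
the discrete energy `E` is conserved, `dE/dt = 0`. -/
theorem stmt8 {nU nV mU mV : ℕ}
    (HU : Matrix (Fin nU) (Fin nU) ℝ) (HV : Matrix (Fin nV) (Fin nV) ℝ)
    (HUΓ : Matrix (Fin mU) (Fin mU) ℝ) (HVΓ : Matrix (Fin mV) (Fin mV) ℝ)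
    (hHU : HU.PosDef) (hHV : HV.PosDef) (hHUΓ : HUΓ.PosDef) (hHVΓ : HVΓ.PosDef)
    (eE dE : Matrix (Fin nU) (Fin mU) ℝ) (eW dW : Matrix (Fin nV) (Fin mV) ℝ)
    (DΔU : Matrix (Fin nU) (Fin nU) ℝ) (DΔV : Matrix (Fin nV) (Fin nV) ℝ)
    (MU : Matrix (Fin nU) (Fin nU) ℝ) (MV : Matrix (Fin nV) (Fin nV) ℝ)
    (hMU : MU.PosSemidef) (hMV : MV.PosSemidef)
    (hSBPU : HU * DΔU = eE * HUΓ * dEᵀ - MU)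
    (hSBPV : HV * DΔV = eW * HVΓ * dWᵀ - MV)
    (Ivug Ivub : Matrix (Fin mU) (Fin mV) ℝ) (Iuvg Iuvb : Matrix (Fin mV) (Fin mU) ℝ)
    (hadj1 : HUΓ * Ivub = Iuvgᵀ * HVΓ)
    (hadj2 : Ivugᵀ * HUΓ = HVΓ * Iuvb)
    (c1sq c2sq hu hv : ℝ) (hc1 : 0 < c1sq) (hc2 : 0 < c2sq) (hhu : 0 < hu) (hhv : 0 < hv)
    (τu τv σu σv : ℝ) (hσv : σv = τu) (hσu : σu = τv)
    (u u' : ℝ → Fin nU → ℝ) (v v' : ℝ → Fin nV → ℝ)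
    (hu' : ∀ t : ℝ, HasDerivAt u (u' t) t)
    (hv' : ∀ t : ℝ, HasDerivAt v (v' t) t)
    (hu'' : ∀ t : ℝ, HasDerivAt u'
      (c1sq • (DΔU *ᵥ u t)
        - HU⁻¹ *ᵥ
            ((τu / hu * c1sq) • (eE *ᵥ (HUΓ *ᵥ (eEᵀ *ᵥ u t - Ivug *ᵥ (eWᵀ *ᵥ v t))))
              + (σu / hv * c2sq) •
                  (eE *ᵥ (HUΓ *ᵥ (Ivub *ᵥ (Iuvg *ᵥ (eEᵀ *ᵥ u t) - eWᵀ *ᵥ v t)))))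
        + HU⁻¹ *ᵥ
            ((c1sq / 2) • (dE *ᵥ (HUΓ *ᵥ (eEᵀ *ᵥ u t - Ivug *ᵥ (eWᵀ *ᵥ v t))))
              - ((1 : ℝ) / 2) •
                  (eE *ᵥ (HUΓ *ᵥ (c1sq • (dEᵀ *ᵥ u t) + c2sq • (Ivub *ᵥ (dWᵀ *ᵥ v t))))))) t)
    (hv'' : ∀ t : ℝ, HasDerivAt v'
      (c2sq • (DΔV *ᵥ v t)
        - HV⁻¹ *ᵥ
            ((τv / hv * c2sq) • (eW *ᵥ (HVΓ *ᵥ (eWᵀ *ᵥ v t - Iuvg *ᵥ (eEᵀ *ᵥ u t))))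
              + (σv / hu * c1sq) •
                  (eW *ᵥ (HVΓ *ᵥ (Iuvb *ᵥ (Ivug *ᵥ (eWᵀ *ᵥ v t) - eEᵀ *ᵥ u t)))))
        + HV⁻¹ *ᵥ
            ((c2sq / 2) • (dW *ᵥ (HVΓ *ᵥ (eWᵀ *ᵥ v t - Iuvg *ᵥ (eEᵀ *ᵥ u t))))
              - ((1 : ℝ) / 2) •
                  (eW *ᵥ (HVΓ *ᵥ (c2sq • (dWᵀ *ᵥ v t) + c1sq • (Iuvb *ᵥ (dEᵀ *ᵥ u t))))))) t) :
    ∀ t : ℝ,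
      HasDerivAt (fun s =>
        (1 / 2 : ℝ) *
          (u' s ⬝ᵥ HU *ᵥ u' s + v' s ⬝ᵥ HV *ᵥ v' s
            + c1sq * (u s ⬝ᵥ MU *ᵥ u s) + c2sq * (v s ⬝ᵥ MV *ᵥ v s)
            + c1sq *
                ((τu / hu) *
                    ((eEᵀ *ᵥ u s - Ivug *ᵥ (eWᵀ *ᵥ v s)) ⬝ᵥ
                      HUΓ *ᵥ (eEᵀ *ᵥ u s - Ivug *ᵥ (eWᵀ *ᵥ v s)))
                  - (dEᵀ *ᵥ u s) ⬝ᵥ HUΓ *ᵥ (eEᵀ *ᵥ u s - Ivug *ᵥ (eWᵀ *ᵥ v s)))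
            + c2sq *
                ((τv / hv) *
                    ((eWᵀ *ᵥ v s - Iuvg *ᵥ (eEᵀ *ᵥ u s)) ⬝ᵥ
                      HVΓ *ᵥ (eWᵀ *ᵥ v s - Iuvg *ᵥ (eEᵀ *ᵥ u s)))
                  - (dWᵀ *ᵥ v s) ⬝ᵥ HVΓ *ᵥ (eWᵀ *ᵥ v s - Iuvg *ᵥ (eEᵀ *ᵥ u s)))))
        0 t :=
  stmt8_general HU HV HUΓ HVΓ hHU hHV hHUΓ hHVΓ eE dE eW dW DΔU DΔV MU MV hMU hMV hSBPU hSBPV Ivug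
    Ivub Iuvg Iuvb hadj1 hadj2 c1sq c2sq hu hv τu τv σu σv hσv hσu u u' v v' hu' hv' hu'' hv''
end

section
/- Let H_U^Γ ∈ ℝ^{m_U×m_U} and H_V^Γ ∈ ℝ^{m_V×m_V} be symmetric positive definite, let M_U ∈ ℝ^{n_U×n_U} and M_V ∈ ℝ^{n_V×n_V} be symmetric, let e_E, d_E ∈ ℝ^{n_U×m_U}, e_W, d_W ∈ ℝ^{n_V×m_V}, I_{v2u}^g ∈ ℝ^{m_U×m_V}, I_{u2v}^g ∈ ℝ^{m_V×m_U}, and suppose the borrowing decompositions M_U = h_u γ_u d_E H_U^Γ d_Eᵀ + M̃_U and M_V = h_v γ_v d_W H_V^Γ d_Wᵀ + M̃_V hold with h_u, h_v, γ_u, γ_v > 0 and M̃_U, M̃_V symmetric positive semidefinite. Let c₁², c₂² > 0 and let τ_u ≥ 1/(4γ_u), τ_v ≥ 1/(4γ_v). Then for all vectors u̇ ∈ ℝ^{n_U}, v̇ ∈ ℝ^{n_V}, u ∈ ℝ^{n_U}, v ∈ ℝ^{n_V}, the discrete energy E = (1/2)[ u̇ᵀH_U u̇ + v̇ᵀH_V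 v̇ + c₁² uᵀM_U u + c₂² vᵀM_V v + c₁² A_u + c₂² A_v ] is nonnegative, where H_U, H_V are symmetric positive definite, A_u = (τ_u/h_u)(e_Eᵀu − I_{v2u}^g e_Wᵀv)ᵀH_U^Γ(e_Eᵀu − I_{v2u}^g e_Wᵀv) − (d_Eᵀu)ᵀH_U^Γ(e_Eᵀu − I_{v2u}^g e_Wᵀv), and A_v = (τ_v/h_v)(e_Wᵀv − I_{u2v}^g e_Eᵀu)ᵀH_V^Γ(e_Wᵀv − I_{u2v}^g e_Eᵀu) − (d_Wᵀv)ᵀH_V^Γ(e_Wᵀv − I_{u2v}^g e_Eᵀu). -/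
/-!
Borrowing splits `uᵀ M_U u` into `h_u γ_u ‖d_Eᵀ u‖²_{H_U^Γ}` plus a nonnegative remainder. The
indefinite cross term `(d_Eᵀ u)ᵀ H_U^Γ r` of `A_u` is then absorbed by Young's inequality
`⟪w, r⟫ ≤ a ‖w‖² + b ‖r‖²` (valid whenever `4ab ≥ 1`), with `a = h_u γ_u` and `b = τ_u / h_u`;
this is exactly the condition `τ_u ≥ 1/(4γ_u)`. The same holds on the `V` side, and all other
terms of the energy are nonnegative.
-/

open Matrix

section
variable {ι κ : Type*} [Fintype ι] [Fintype κ]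

theorem dotProduct_mul_mul_transpose_mulVec {R : Type*} [CommSemiring R] (A : Matrix ι κ R)
    (B : Matrix κ κ R) (u : ι → R) :
    u ⬝ᵥ (A * B * Aᵀ) *ᵥ u = (Aᵀ *ᵥ u) ⬝ᵥ B *ᵥ (Aᵀ *ᵥ u) := by
  rw [← mulVec_mulVec, ← mulVec_mulVec, dotProduct_mulVec u A, ← mulVec_transpose]

theorem Matrix.PosSemidef.dotProduct_mulVec_comm {H : Matrix κ κ ℝ} (hH : H.PosSemidef)
    (w η : κ → ℝ) : w ⬝ᵥ H *ᵥ η = η ⬝ᵥ H *ᵥ w := by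
  rw [← dotProduct_transpose_mulVec, ← conjTranspose_eq_transpose_of_trivial, hH.1.eq]

theorem Matrix.PosSemidef.dotProduct_mulVec_le {H : Matrix κ κ ℝ} (hH : H.PosSemidef)
    {a b : ℝ} (ha : 0 < a) (hab : 1 ≤ 4 * a * b) (w η : κ → ℝ) :
    w ⬝ᵥ H *ᵥ η ≤ a * (w ⬝ᵥ H *ᵥ w) + b * (η ⬝ᵥ H *ᵥ η) := by
  have hsq := hH.dotProduct_mulVec_nonneg ((2 * a) • w - η)
  simp only [star_trivial, mulVec_sub, mulVec_smul, dotProduct_sub, sub_dotProduct,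
    smul_dotProduct, dotProduct_smul, smul_eq_mul, hH.dotProduct_mulVec_comm η w] at hsq
  have hη : 0 ≤ η ⬝ᵥ H *ᵥ η := by simpa using hH.dotProduct_mulVec_nonneg η
  nlinarith [mul_le_mul_of_nonneg_right hab hη]

theorem interface_energy_nonneg {HΓ : Matrix κ κ ℝ} (hHΓ : HΓ.PosSemidef)
    {M Mt : Matrix ι ι ℝ} (hMt : Mt.PosSemidef) {d : Matrix ι κ ℝ} {h γ τ : ℝ}
    (hh : 0 < h) (hγ : 0 < γ) (hborrow : M = (h * γ) • (d * HΓ * dᵀ) + Mt)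
    (hτ : 1 / (4 * γ) ≤ τ) (u : ι → ℝ) (r : κ → ℝ) :
    0 ≤ u ⬝ᵥ M *ᵥ u + ((τ / h) * (r ⬝ᵥ HΓ *ᵥ r) - (dᵀ *ᵥ u) ⬝ᵥ HΓ *ᵥ r) := by
  have hsplit : u ⬝ᵥ M *ᵥ u = h * γ * ((dᵀ *ᵥ u) ⬝ᵥ HΓ *ᵥ (dᵀ *ᵥ u)) + u ⬝ᵥ Mt *ᵥ u := by
    rw [hborrow, add_mulVec, smul_mulVec, dotProduct_add, dotProduct_smul, smul_eq_mul,
      dotProduct_mul_mul_transpose_mulVec]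
  have hab : 1 ≤ 4 * (h * γ) * (τ / h) := by
    rw [div_le_iff₀ (by positivity)] at hτ
    rw [mul_div_assoc', le_div_iff₀ hh]
    nlinarith
  have hYoung := hHΓ.dotProduct_mulVec_le (by positivity) hab (dᵀ *ᵥ u) r
  have hMt' : 0 ≤ u ⬝ᵥ Mt *ᵥ u := by simpa using hMt.dotProduct_mulVec_nonneg u
  linarith

end

theorem stmt9_general {nU nV mU mV : ℕ}
    (HUΓ : Matrix (Fin mU) (Fin mU) ℝ) (HVΓ : Matrix (Fin mV) (Fin mV) ℝ)
    (hHUΓ : HUΓ.PosDef) (hHVΓ : HVΓ.PosDef)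
    (MU : Matrix (Fin nU) (Fin nU) ℝ) (MV : Matrix (Fin nV) (Fin nV) ℝ)
    (eE dE : Matrix (Fin nU) (Fin mU) ℝ) (eW dW : Matrix (Fin nV) (Fin mV) ℝ)
    (Ivug : Matrix (Fin mU) (Fin mV) ℝ) (Iuvg : Matrix (Fin mV) (Fin mU) ℝ)
    (hu hv γu γv : ℝ) (hhu : 0 < hu) (hhv : 0 < hv) (hγu : 0 < γu) (hγv : 0 < γv)
    (MtU : Matrix (Fin nU) (Fin nU) ℝ) (MtV : Matrix (Fin nV) (Fin nV) ℝ)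
    (hMtU : MtU.PosSemidef) (hMtV : MtV.PosSemidef)
    (hborrowU : MU = (hu * γu) • (dE * HUΓ * dEᵀ) + MtU)
    (hborrowV : MV = (hv * γv) • (dW * HVΓ * dWᵀ) + MtV)
    (c1sq c2sq : ℝ) (hc1 : 0 < c1sq) (hc2 : 0 < c2sq)
    (τu τv : ℝ) (hτu : 1 / (4 * γu) ≤ τu) (hτv : 1 / (4 * γv) ≤ τv)
    (HU : Matrix (Fin nU) (Fin nU) ℝ) (HV : Matrix (Fin nV) (Fin nV) ℝ)
    (hHU : HU.PosDef) (hHV : HV.PosDef) :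
    ∀ (du : Fin nU → ℝ) (dv : Fin nV → ℝ) (u : Fin nU → ℝ) (v : Fin nV → ℝ),
      0 ≤ (1 / 2 : ℝ) *
        (du ⬝ᵥ HU *ᵥ du + dv ⬝ᵥ HV *ᵥ dv
          + c1sq * (u ⬝ᵥ MU *ᵥ u) + c2sq * (v ⬝ᵥ MV *ᵥ v)
          + c1sq *
              ((τu / hu) *
                  ((eEᵀ *ᵥ u - Ivug *ᵥ (eWᵀ *ᵥ v)) ⬝ᵥ
                    HUΓ *ᵥ (eEᵀ *ᵥ u - Ivug *ᵥ (eWᵀ *ᵥ v)))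
                - (dEᵀ *ᵥ u) ⬝ᵥ HUΓ *ᵥ (eEᵀ *ᵥ u - Ivug *ᵥ (eWᵀ *ᵥ v)))
          + c2sq *
              ((τv / hv) *
                  ((eWᵀ *ᵥ v - Iuvg *ᵥ (eEᵀ *ᵥ u)) ⬝ᵥ
                    HVΓ *ᵥ (eWᵀ *ᵥ v - Iuvg *ᵥ (eEᵀ *ᵥ u)))
                - (dWᵀ *ᵥ v) ⬝ᵥ HVΓ *ᵥ (eWᵀ *ᵥ v - Iuvg *ᵥ (eEᵀ *ᵥ u)))) := by
  intro du dv u v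
  have hU := interface_energy_nonneg hHUΓ.posSemidef hMtU hhu hγu hborrowU hτu u
    (eEᵀ *ᵥ u - Ivug *ᵥ (eWᵀ *ᵥ v))
  have hV := interface_energy_nonneg hHVΓ.posSemidef hMtV hhv hγv hborrowV hτv v
    (eWᵀ *ᵥ v - Iuvg *ᵥ (eEᵀ *ᵥ u))
  have hdu : 0 ≤ du ⬝ᵥ HU *ᵥ du := by simpa using hHU.posSemidef.dotProduct_mulVec_nonneg du
  have hdv : 0 ≤ dv ⬝ᵥ HV *ᵥ dv := by simpa using hHV.posSemidef.dotProduct_mulVec_nonneg dv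
  nlinarith [mul_nonneg hc1.le hU, mul_nonneg hc2.le hV]

/-- Nonnegativity of the discrete wave-equation energy: under the borrowing decompositions
`M_U = h_u γ_u d_E H_U^Γ d_Eᵀ + M̃_U` and `M_V = h_v γ_v d_W H_V^Γ d_Wᵀ + M̃_V` with `M̃_U`,
`M̃_V` positive semidefinite, and penalty parameters `τ_u ≥ 1/(4γ_u)`, `τ_v ≥ 1/(4γ_v)`,
the discrete energy `E` is nonnegative for all states. -/
theorem stmt9 {nU nV mU mV : ℕ}
    (HUΓ : Matrix (Fin mU) (Fin mU) ℝ) (HVΓ : Matrix (Fin mV) (Fin mV) ℝ)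
    (hHUΓ : HUΓ.PosDef) (hHVΓ : HVΓ.PosDef)
    (MU : Matrix (Fin nU) (Fin nU) ℝ) (MV : Matrix (Fin nV) (Fin nV) ℝ)
    (hMU : MU.IsSymm) (hMV : MV.IsSymm)
    (eE dE : Matrix (Fin nU) (Fin mU) ℝ) (eW dW : Matrix (Fin nV) (Fin mV) ℝ)
    (Ivug : Matrix (Fin mU) (Fin mV) ℝ) (Iuvg : Matrix (Fin mV) (Fin mU) ℝ)
    (hu hv γu γv : ℝ) (hhu : 0 < hu) (hhv : 0 < hv) (hγu : 0 < γu) (hγv : 0 < γv)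
    (MtU : Matrix (Fin nU) (Fin nU) ℝ) (MtV : Matrix (Fin nV) (Fin nV) ℝ)
    (hMtU : MtU.PosSemidef) (hMtV : MtV.PosSemidef)
    (hborrowU : MU = (hu * γu) • (dE * HUΓ * dEᵀ) + MtU)
    (hborrowV : MV = (hv * γv) • (dW * HVΓ * dWᵀ) + MtV)
    (c1sq c2sq : ℝ) (hc1 : 0 < c1sq) (hc2 : 0 < c2sq)
    (τu τv : ℝ) (hτu : 1 / (4 * γu) ≤ τu) (hτv : 1 / (4 * γv) ≤ τv)
    (HU : Matrix (Fin nU) (Fin nU) ℝ) (HV : Matrix (Fin nV) (Fin nV) ℝ)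
    (hHU : HU.PosDef) (hHV : HV.PosDef) :
    ∀ (du : Fin nU → ℝ) (dv : Fin nV → ℝ) (u : Fin nU → ℝ) (v : Fin nV → ℝ),
      0 ≤ (1 / 2 : ℝ) *
        (du ⬝ᵥ HU *ᵥ du + dv ⬝ᵥ HV *ᵥ dv
          + c1sq * (u ⬝ᵥ MU *ᵥ u) + c2sq * (v ⬝ᵥ MV *ᵥ v)
          + c1sq *
              ((τu / hu) *
                  ((eEᵀ *ᵥ u - Ivug *ᵥ (eWᵀ *ᵥ v)) ⬝ᵥ
                    HUΓ *ᵥ (eEᵀ *ᵥ u - Ivug *ᵥ (eWᵀ *ᵥ v)))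
                - (dEᵀ *ᵥ u) ⬝ᵥ HUΓ *ᵥ (eEᵀ *ᵥ u - Ivug *ᵥ (eWᵀ *ᵥ v)))
          + c2sq *
              ((τv / hv) *
                  ((eWᵀ *ᵥ v - Iuvg *ᵥ (eEᵀ *ᵥ u)) ⬝ᵥ
                    HVΓ *ᵥ (eWᵀ *ᵥ v - Iuvg *ᵥ (eEᵀ *ᵥ u)))
                - (dWᵀ *ᵥ v) ⬝ᵥ HVΓ *ᵥ (eWᵀ *ᵥ v - Iuvg *ᵥ (eEᵀ *ᵥ u)))) :=
  stmt9_general HUΓ HVΓ hHUΓ hHVΓ MU MV eE dE eW dW Ivug Iuvg hu hv γu γv hhu hhv hγu hγv MtU MtV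
    hMtU hMtV hborrowU hborrowV c1sq c2sq hc1 hc2 τu τv hτu hτv HU HV hHU hHV
end

section
/- Let λ₁, λ₂ > 0 and k₁, k₂ ∈ ℝ, set ω = λ₁(k₁² + k₂²), assume ω/λ₂ − k₂² ≥ 0 and set k = √(ω/λ₂ − k₂²), assume λ₁k₁ + λ₂k ≠ 0 and set γ = (λ₁k₁ − λ₂k)/(λ₁k₁ + λ₂k). Define u(x,y,t) = cos(k₁x + k₂y)e^{−ωt} + γ cos(k₁x − k₂y)e^{−ωt} and v(x,y,t) = (1+γ) cos(kx + k₂y)e^{−ωt}. Then for all (x,y,t) ∈ ℝ³: ∂u/∂t = λ₁(∂²u/∂x² + ∂²u/∂y²) and ∂v/∂t = λ₂(∂²v/∂x² + ∂²v/∂y²); and for all (y,t) ∈ ℝ²: u(0,y,t) = v(0,y,t) and λ₁ ∂u/∂x(0,y,t) = λ₂ ∂v/∂x(0,y,t). -/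
/-!
Each of `u`, `v` is a superposition of plane waves `cos (a x + b y) e^{-ω t}`, which solve the heat
equation with coefficient `λ` exactly when `ω = λ (a² + b²)`; the definition of `k` is what makes
this hold for the transmitted wave `v` with `λ = λ₂`. At `x = 0` the incident wave and its mirror
image `cos (k₁ x - k₂ y)` coincide, giving continuity, and their `x`-derivatives are opposite, so the
flux condition reduces to `λ₁ k₁ (1 - γ) = λ₂ k (1 + γ)`, which is the choice of `γ`.
-/

open Real

def SolvesHeatEq (l : ℝ) (w : ℝ → ℝ → ℝ → ℝ) : Prop :=
  ∀ x y t : ℝ, deriv (fun s => w x y s) t =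
    l * (deriv (fun s => deriv (fun r => w r y t) s) x
      + deriv (fun s => deriv (fun r => w x r t) s) y)

noncomputable def mirroredWaves (P Q a b ω : ℝ) (x y t : ℝ) : ℝ :=
  P * cos (a * x + b * y) * exp (-ω * t) + Q * cos (a * x - b * y) * exp (-ω * t)

section AffineCos

variable (P a b : ℝ)

lemma hasDerivAt_mul_cos_affine (x : ℝ) :
    HasDerivAt (fun r => P * cos (a * r + b)) (-(P * a) * sin (a * x + b)) x :=
  (((hasDerivAt_id' x).const_mul a).add_const b).cos.const_mul P |>.congr_deriv (by ring)

lemma hasDerivAt_mul_sin_affine (x : ℝ) :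
    HasDerivAt (fun r => P * sin (a * r + b)) (P * a * cos (a * x + b)) x :=
  (((hasDerivAt_id' x).const_mul a).add_const b).sin.const_mul P |>.congr_deriv (by ring)

variable (Q a' b' : ℝ)

lemma deriv_add_mul_cos_affine :
    deriv (fun r => P * cos (a * r + b) + Q * cos (a' * r + b')) =
      fun s => -(P * a) * sin (a * s + b) + -(Q * a') * sin (a' * s + b') :=
  funext fun s =>
    ((hasDerivAt_mul_cos_affine P a b s).add (hasDerivAt_mul_cos_affine Q a' b' s)).deriv

lemma deriv_deriv_add_mul_cos_affine (x : ℝ) :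
    deriv (fun s => deriv (fun r => P * cos (a * r + b) + Q * cos (a' * r + b')) s) x =
      -(a ^ 2 * (P * cos (a * x + b)) + a' ^ 2 * (Q * cos (a' * x + b'))) := by
  rw [deriv_add_mul_cos_affine]
  exact ((hasDerivAt_mul_sin_affine _ a b x).add (hasDerivAt_mul_sin_affine _ a' b' x)).deriv.trans
    (by ring)

end AffineCos

lemma deriv_mul_exp_neg_mul (C ω t : ℝ) :
    deriv (fun s => C * exp (-ω * s)) t = -ω * (C * exp (-ω * t)) :=
  (((hasDerivAt_id' t).const_mul (-ω)).exp.const_mul C).deriv.trans (by ring)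

section MirroredWaves

variable (P Q a b ω : ℝ)

lemma mirroredWaves_x_line (y t : ℝ) :
    (fun r => mirroredWaves P Q a b ω r y t) = fun r =>
      P * exp (-ω * t) * cos (a * r + b * y) + Q * exp (-ω * t) * cos (a * r + -(b * y)) := by
  funext r
  rw [mirroredWaves, sub_eq_add_neg]
  ring

lemma mirroredWaves_y_line (x t : ℝ) :
    (fun r => mirroredWaves P Q a b ω x r t) = fun r =>
      P * exp (-ω * t) * cos (b * r + a * x) + Q * exp (-ω * t) * cos (-b * r + a * x) := by
  funext r
  rw [mirroredWaves]
  ring_nf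

lemma mirroredWaves_t_line (x y : ℝ) :
    (fun s => mirroredWaves P Q a b ω x y s) = fun s =>
      (P * cos (a * x + b * y) + Q * cos (a * x - b * y)) * exp (-ω * s) := by
  funext s
  rw [mirroredWaves]
  ring

theorem solvesHeatEq_mirroredWaves {l : ℝ} (hω : ω = l * (a ^ 2 + b ^ 2)) :
    SolvesHeatEq l (mirroredWaves P Q a b ω) := by
  intro x y t
  rw [mirroredWaves_t_line, mirroredWaves_x_line, mirroredWaves_y_line, deriv_mul_exp_neg_mul,
    deriv_deriv_add_mul_cos_affine, deriv_deriv_add_mul_cos_affine, hω]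
  ring_nf

lemma mirroredWaves_zero (y t : ℝ) :
    mirroredWaves P Q a b ω 0 y t = (P + Q) * cos (b * y) * exp (-ω * t) := by
  rw [mirroredWaves, mul_zero, zero_add, zero_sub, cos_neg]
  ring

lemma deriv_mirroredWaves_zero (y t : ℝ) :
    deriv (fun r => mirroredWaves P Q a b ω r y t) 0 =
      a * (Q - P) * sin (b * y) * exp (-ω * t) := by
  rw [mirroredWaves_x_line, deriv_add_mul_cos_affine]
  simp only [mul_zero, zero_add, sin_neg]
  ring

end MirroredWaves

lemma mul_one_sub_div_eq_mul_one_add_div {p q : ℝ} (h : p + q ≠ 0) :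
    p * (1 - (p - q) / (p + q)) = q * (1 + (p - q) / (p + q)) := by
  field_simp
  ring

theorem stmt12_general (l1 l2 k1 k2 : ℝ) (hl2 : 0 < l2)
    (ω : ℝ) (hω : ω = l1 * (k1 ^ 2 + k2 ^ 2))
    (hpos : 0 ≤ ω / l2 - k2 ^ 2) (k : ℝ) (hk : k = Real.sqrt (ω / l2 - k2 ^ 2))
    (hden : l1 * k1 + l2 * k ≠ 0)
    (γ : ℝ) (hγ : γ = (l1 * k1 - l2 * k) / (l1 * k1 + l2 * k))
    (u v : ℝ → ℝ → ℝ → ℝ)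
    (hu : ∀ x y t, u x y t =
      Real.cos (k1 * x + k2 * y) * Real.exp (-ω * t)
        + γ * Real.cos (k1 * x - k2 * y) * Real.exp (-ω * t))
    (hv : ∀ x y t, v x y t = (1 + γ) * Real.cos (k * x + k2 * y) * Real.exp (-ω * t)) :
    (∀ x y t : ℝ, deriv (fun s => u x y s) t =
      l1 * (deriv (fun s => deriv (fun r => u r y t) s) x
        + deriv (fun s => deriv (fun r => u x r t) s) y)) ∧
    (∀ x y t : ℝ, deriv (fun s => v x y s) t =
      l2 * (deriv (fun s => deriv (fun r => v r y t) s) x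
        + deriv (fun s => deriv (fun r => v x r t) s) y)) ∧
    (∀ y t : ℝ, u 0 y t = v 0 y t) ∧
    (∀ y t : ℝ, l1 * deriv (fun s => u s y t) 0 = l2 * deriv (fun s => v s y t) 0) := by
  have hu' : u = mirroredWaves 1 γ k1 k2 ω := by
    funext x y t
    rw [hu, mirroredWaves, one_mul]
  have hv' : v = mirroredWaves (1 + γ) 0 k k2 ω := by
    funext x y t
    rw [hv, mirroredWaves, zero_mul, zero_mul, add_zero]
  have hωv : ω = l2 * (k ^ 2 + k2 ^ 2) := by
    rw [hk, sq_sqrt hpos]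
    field_simp
    ring
  have hflux : l1 * k1 * (1 - γ) = l2 * k * (1 + γ) := by
    rw [hγ]
    exact mul_one_sub_div_eq_mul_one_add_div hden
  subst hu' hv'
  refine ⟨solvesHeatEq_mirroredWaves _ _ _ _ _ hω, solvesHeatEq_mirroredWaves _ _ _ _ _ hωv,
    fun y t => ?_, fun y t => ?_⟩
  · rw [mirroredWaves_zero, mirroredWaves_zero, add_zero]
  · rw [deriv_mirroredWaves_zero, deriv_mirroredWaves_zero]
    linear_combination (-(sin (k2 * y) * exp (-ω * t))) * hflux

/-- The analytical solution of the heat equation with piecewise constant diffusion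
coefficient (`λ₁` on the left half plane and `λ₂` on the right half plane): `u` and `v`
satisfy the heat equations and the interface conditions `u = v` and `λ₁ u_x = λ₂ v_x`
at `x = 0`. -/
theorem stmt12 (l1 l2 k1 k2 : ℝ) (hl1 : 0 < l1) (hl2 : 0 < l2)
    (ω : ℝ) (hω : ω = l1 * (k1 ^ 2 + k2 ^ 2))
    (hpos : 0 ≤ ω / l2 - k2 ^ 2) (k : ℝ) (hk : k = Real.sqrt (ω / l2 - k2 ^ 2))
    (hden : l1 * k1 + l2 * k ≠ 0)
    (γ : ℝ) (hγ : γ = (l1 * k1 - l2 * k) / (l1 * k1 + l2 * k))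
    (u v : ℝ → ℝ → ℝ → ℝ)
    (hu : ∀ x y t, u x y t =
      Real.cos (k1 * x + k2 * y) * Real.exp (-ω * t)
        + γ * Real.cos (k1 * x - k2 * y) * Real.exp (-ω * t))
    (hv : ∀ x y t, v x y t = (1 + γ) * Real.cos (k * x + k2 * y) * Real.exp (-ω * t)) :
    (∀ x y t : ℝ, deriv (fun s => u x y s) t =
      l1 * (deriv (fun s => deriv (fun r => u r y t) s) x
        + deriv (fun s => deriv (fun r => u x r t) s) y)) ∧
    (∀ x y t : ℝ, deriv (fun s => v x y s) t =
      l2 * (deriv (fun s => deriv (fun r => v r y t) s) x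
        + deriv (fun s => deriv (fun r => v x r t) s) y)) ∧
    (∀ y t : ℝ, u 0 y t = v 0 y t) ∧
    (∀ y t : ℝ, l1 * deriv (fun s => u s y t) 0 = l2 * deriv (fun s => v s y t) 0) :=
  stmt12_general l1 l2 k1 k2 hl2 ω hω hpos k hk hden γ hγ u v hu hv
end
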